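/- Let W : {0,1} → 𝒴 and W' : {0,1} → 𝒴' be two B-DMCs such that W is degraded with respect to W'. Then for every N = 2^n and every i ∈ {1,…,N}, the split channel W_N^{(i)} is degraded with respect to W'_N^{(i)}, and Z(W_N^{(i)}) ≥ Z(W'_N^{(i)}). -/

import Mathlib

open scoped BigOperators

/-- A binary-input discrete memoryless channel (B-DMC). -/
def IsBDMC {Y : Type*} [Fintype Y] (W : ZMod 2 → Y → ℝ) : Prop :=
  (∀ x y, 0 ≤ W x y) ∧ ∀ x, ∑ y, W x y = 1

/-- Bhattacharyya parameter `Z(W)`. -/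
noncomputable def bhatt {Y : Type*} [Fintype Y] (W : ZMod 2 → Y → ℝ) : ℝ :=
  ∑ y, Real.sqrt (W 0 y * W 1 y)

/-- Symmetric capacity `I(W)` (in bits); terms with `W x y = 0` contribute `0`
thanks to the convention `Real.log 0 = 0` and the multiplicative factor `W x y`. -/
noncomputable def symCap {Y : Type*} [Fintype Y] (W : ZMod 2 → Y → ℝ) : ℝ :=
  ∑ x : ZMod 2, ∑ y, (1 / 2) * W x y *
    Real.logb 2 (W x y / ((1 / 2) * W 0 y + (1 / 2) * W 1 y))

/-- The bit-reversal permutation on `Fin (2^n)`. -/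
def bitRev (n : ℕ) (i : Fin (2 ^ n)) : Fin (2 ^ n) :=
  ⟨(∑ k ∈ Finset.range n, if Nat.testBit i.val k then 2 ^ (n - 1 - k) else 0) % 2 ^ n,
    Nat.mod_lt _ (Nat.pow_pos (by norm_num))⟩

/-- The generator matrix `B_N F^{⊗n}` over `𝔽₂`, where `F = [[1,0],[1,1]]`:
the `(i,j)` entry of `F^{⊗n}` is `1` iff every binary digit of `j` is dominated by the
corresponding digit of `i`, and `B_N` acts by bit reversal on the row index. -/
def polarGen (n : ℕ) : Matrix (Fin (2 ^ n)) (Fin (2 ^ n)) (ZMod 2) :=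
  fun i j =>
    if ∀ k < n, j.val.testBit k = true → (bitRev n i).val.testBit k = true then 1 else 0

/-- The polar encoding `x = u · B_N F^{⊗n}` over `𝔽₂`. -/
def polarEnc (n : ℕ) (u : Fin (2 ^ n) → ZMod 2) : Fin (2 ^ n) → ZMod 2 :=
  fun j => ∑ i, u i * polarGen n i j

/-- The combined channel `W_N(y₁^N | u₁^N) = Π_i W(y_i | x_i)`, `x = u·B_N F^{⊗n}`. -/
noncomputable def combinedCh {Y : Type*} [Fintype Y] (n : ℕ) (W : ZMod 2 → Y → ℝ)
    (u : Fin (2 ^ n) → ZMod 2) (y : Fin (2 ^ n) → Y) : ℝ :=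
  ∏ i, W (polarEnc n u i) (y i)

/-- The split channel `W_N^{(i)}(y₁^N, u₁^{i-1} | u_i)`; it is a B-DMC with input
`u_i` and output `(y₁^N, u₁^{i-1})`.  (Indices are `0`-based: the channel `W_N^{(i)}`
of the paper, `i = 1, …, N`, is `splitCh n W ⟨i-1, _⟩` here.) -/
noncomputable def splitCh {Y : Type*} [Fintype Y] (n : ℕ) (W : ZMod 2 → Y → ℝ)
    (i : Fin (2 ^ n)) (b : ZMod 2) (o : (Fin (2 ^ n) → Y) × (Fin i.val → ZMod 2)) : ℝ :=
  ∑ u : Fin (2 ^ n) → ZMod 2,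
    if (∀ j : Fin i.val, u ⟨j.val, j.isLt.trans i.isLt⟩ = o.2 j) ∧ u i = b then
      (2 : ℝ) ^ (-((2 ^ n : ℤ) - 1)) * combinedCh n W u o.1
    else 0

/-- `W` is degraded with respect to `W'` if `W` is obtained by composing `W'` with a
further channel `W''`: `W(y|x) = Σ_{y'} W'(y'|x)·W''(y|y')`. -/
def DegradedWrt {X Y Y' : Type*} [Fintype Y] [Fintype Y']
    (W : X → Y → ℝ) (W' : X → Y' → ℝ) : Prop :=
  ∃ Wd : Y' → Y → ℝ, (∀ y' y, 0 ≤ Wd y' y) ∧ (∀ y', ∑ y, Wd y' y = 1) ∧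
    ∀ x y, W x y = ∑ y', W' x y' * Wd y' y

/-!
A degrading kernel `K` for `W` w.r.t. `W'` degrades the product channel `W^N` w.r.t. `W'^N`
by acting on each coordinate, i.e. by `∏ⱼ K(y'ⱼ, yⱼ)`. Each split channel is a nonnegative
mixture, over the inputs `u`, of the product channel fed with `u B_N F^{⊗n}`, with weights
depending only on `u_i` and on the side output `u₁^{i-1}`; applying the product kernel to
`y₁^N` and leaving `u₁^{i-1}` unchanged therefore degrades `W_N^{(i)}` w.r.t. `W'_N^{(i)}`.
Degradation can only increase the Bhattacharyya parameter, by Cauchy–Schwarz at each output.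
-/

open Finset

theorem Real.sum_sqrt_mul_mul_le_sqrt {ι : Type*} (s : Finset ι) {f g w : ι → ℝ}
    (hf : ∀ i, 0 ≤ f i) (hg : ∀ i, 0 ≤ g i) (hw : ∀ i, 0 ≤ w i) :
    ∑ i ∈ s, √(f i * g i) * w i ≤ √((∑ i ∈ s, f i * w i) * ∑ i ∈ s, g i * w i) := by
  have hsplit : ∀ i, √(f i * g i) * w i = √(f i * w i) * √(g i * w i) := fun i => by
    rw [← Real.sqrt_mul (mul_nonneg (hf i) (hw i)),
      show f i * w i * (g i * w i) = f i * g i * (w i * w i) by ring,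
      Real.sqrt_mul (mul_nonneg (hf i) (hg i)), Real.sqrt_mul_self (hw i)]
  simp_rw [hsplit]
  rw [Real.sqrt_mul (sum_nonneg fun i _ => mul_nonneg (hf i) (hw i))]
  exact Real.sum_sqrt_mul_sqrt_le s (fun i => mul_nonneg (hf i) (hw i))
    (fun i => mul_nonneg (hg i) (hw i))

namespace DegradedWrt

variable {X Y Y' : Type*} [Fintype Y] [Fintype Y'] {W : X → Y → ℝ} {W' : X → Y' → ℝ}

theorem comp_input {A : Type*} (h : DegradedWrt W W') (f : A → X) :
    DegradedWrt (fun a => W (f a)) (fun a => W' (f a)) :=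
  let ⟨K, hK0, hK1, hWK⟩ := h
  ⟨K, hK0, hK1, fun a => hWK (f a)⟩

theorem pi {ι : Type*} [Fintype ι] [DecidableEq ι] (h : DegradedWrt W W') :
    DegradedWrt (fun (x : ι → X) (y : ι → Y) => ∏ j, W (x j) (y j))
      (fun (x : ι → X) (y' : ι → Y') => ∏ j, W' (x j) (y' j)) := by
  obtain ⟨K, hK0, hK1, hWK⟩ := h
  refine ⟨fun y' y => ∏ j, K (y' j) (y j), fun y' y => prod_nonneg fun j _ => hK0 _ _,
    fun y' => ?_, fun x y => ?_⟩
  · rw [← Fintype.prod_sum]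
    simp [hK1]
  · simp_rw [hWK, Fintype.prod_sum, ← prod_mul_distrib]

/-- The degrading kernel acts on `o.1` only and passes the side output `o.2` through. -/
theorem mixture_with_side {U S : Type*} [Fintype U] [Fintype S] [DecidableEq S]
    {P : U → Y → ℝ} {P' : U → Y' → ℝ} (h : DegradedWrt P P') (c : X → S → U → ℝ) :
    DegradedWrt (fun x (o : Y × S) => ∑ u, c x o.2 u * P u o.1)
      (fun x (o' : Y' × S) => ∑ u, c x o'.2 u * P' u o'.1) := by
  obtain ⟨K, hK0, hK1, hPK⟩ := h
  refine ⟨fun o' o => K o'.1 o.1 * if o'.2 = o.2 then 1 else 0, fun o' o => ?_,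
    fun o' => ?_, fun x o => ?_⟩
  · exact mul_nonneg (hK0 _ _) (by split_ifs <;> norm_num)
  · simp [Fintype.sum_prod_type, hK1]
  · simp only [Fintype.sum_prod_type, mul_ite, mul_one, mul_zero, sum_ite_eq', mem_univ,
      if_true, hPK, mul_sum, sum_mul]
    rw [sum_comm]
    exact sum_congr rfl fun u _ => sum_congr rfl fun y' _ => by ring

end DegradedWrt

theorem DegradedWrt.bhatt_le {Y Y' : Type*} [Fintype Y] [Fintype Y']
    {W : ZMod 2 → Y → ℝ} {W' : ZMod 2 → Y' → ℝ} (hW' : ∀ x y', 0 ≤ W' x y')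
    (h : DegradedWrt W W') : bhatt W' ≤ bhatt W := by
  obtain ⟨K, hK0, hK1, hWK⟩ := h
  calc bhatt W' = ∑ y', ∑ y, √(W' 0 y' * W' 1 y') * K y' y := by
        simp [bhatt, ← mul_sum, hK1]
    _ = ∑ y, ∑ y', √(W' 0 y' * W' 1 y') * K y' y := sum_comm
    _ ≤ bhatt W := sum_le_sum fun y _ => by
        rw [hWK 0 y, hWK 1 y]
        exact Real.sum_sqrt_mul_mul_le_sqrt _ (hW' 0) (hW' 1) (hK0 · y)

theorem DegradedWrt.combinedCh {Y Y' : Type*} [Fintype Y] [Fintype Y']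
    {W : ZMod 2 → Y → ℝ} {W' : ZMod 2 → Y' → ℝ} (h : DegradedWrt W W') (n : ℕ) :
    DegradedWrt (combinedCh n W) (combinedCh n W') :=
  h.pi.comp_input (polarEnc n)

noncomputable def splitWeight (n : ℕ) (i : Fin (2 ^ n)) (b : ZMod 2) (v : Fin i.val → ZMod 2)
    (u : Fin (2 ^ n) → ZMod 2) : ℝ :=
  if (∀ j : Fin i.val, u ⟨j.val, j.isLt.trans i.isLt⟩ = v j) ∧ u i = b then
    (2 : ℝ) ^ (-((2 ^ n : ℤ) - 1)) else 0

theorem splitCh_eq_mixture {Y : Type*} [Fintype Y] (n : ℕ) (W : ZMod 2 → Y → ℝ)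
    (i : Fin (2 ^ n)) :
    splitCh n W i = fun b o => ∑ u, splitWeight n i b o.2 u * combinedCh n W u o.1 := by
  funext b o
  simp only [splitCh, splitWeight, ite_mul, zero_mul]

theorem splitCh_nonneg {Y : Type*} [Fintype Y] (n : ℕ) {W : ZMod 2 → Y → ℝ}
    (hW : ∀ x y, 0 ≤ W x y) (i : Fin (2 ^ n)) (b : ZMod 2)
    (o : (Fin (2 ^ n) → Y) × (Fin i.val → ZMod 2)) : 0 ≤ splitCh n W i b o :=
  sum_nonneg fun _ _ => by
    split_ifs
    · exact mul_nonneg (by positivity) (prod_nonneg fun _ _ => hW _ _)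
    · exact le_rfl

theorem split_degraded_and_bhatt_ge_general {Y Y' : Type*} [Fintype Y] [Fintype Y']
    (W : ZMod 2 → Y → ℝ) (W' : ZMod 2 → Y' → ℝ)
    (hW' : IsBDMC W') (hdeg : DegradedWrt W W')
    (n : ℕ) (i : Fin (2 ^ n)) :
    DegradedWrt (splitCh n W i) (splitCh n W' i) ∧
    bhatt (splitCh n W' i) ≤ bhatt (splitCh n W i) := by
  have hsplit : DegradedWrt (splitCh n W i) (splitCh n W' i) := by
    rw [splitCh_eq_mixture, splitCh_eq_mixture]
    exact (hdeg.combinedCh n).mixture_with_side (splitWeight n i)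
  exact ⟨hsplit, hsplit.bhatt_le (splitCh_nonneg n hW'.1 i)⟩

/-- (Lemma 4.7 of Korada) If the B-DMC `W` is degraded w.r.t. the B-DMC `W'`, then for
every `N = 2^n` and every index `i`, the split channel `W_N^{(i)}` is degraded w.r.t.
`W'_N^{(i)}`, and `Z(W_N^{(i)}) ≥ Z(W'_N^{(i)})`. -/
theorem split_degraded_and_bhatt_ge {Y Y' : Type*} [Fintype Y] [Fintype Y']
    (W : ZMod 2 → Y → ℝ) (W' : ZMod 2 → Y' → ℝ)
    (hW : IsBDMC W) (hW' : IsBDMC W') (hdeg : DegradedWrt W W')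
    (n : ℕ) (i : Fin (2 ^ n)) :
    DegradedWrt (splitCh n W i) (splitCh n W' i) ∧
    bhatt (splitCh n W' i) ≤ bhatt (splitCh n W i) :=
  split_degraded_and_bhatt_ge_general W W' hW' hdeg n i
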